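/- arXiv:1903.08865 — 2 statements merged into one kernel-verified Lean document; each statement's English description precedes it below -/
import Mathlib

section
/- Let c ∈ ℚ with den(c) = d² where d is a positive integer divisible by 4, and suppose Per(φ_c) is finite. Let m be the number of residue classes modulo d occupied by the numerators of the rational periodic points of φ_c. Then m ≤ |Per(φ_c)| ≤ m + 2. -/
noncomputable section
open Function

private abbrev phiC (c : ℚ) : ℚ → ℚ := fun t => t ^ 2 - c
private def PerS (c : ℚ) : Set ℚ := {x : ℚ | ∃ n : ℕ, 1 ≤ n ∧ (phiC c)^[n] x = x}

private lemma perS_maps {c : ℚ} {x : ℚ} (hx : x ∈ PerS c) : phiC c x ∈ PerS c := by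
  obtain ⟨n, hn, hfix⟩ := hx
  exact ⟨n, hn, by rw [← Function.iterate_succ_apply, Function.iterate_succ_apply', hfix]⟩

private lemma perS_iter {c : ℚ} {x : ℚ} (hx : x ∈ PerS c) (i : ℕ) :
    (phiC c)^[i] x ∈ PerS c := by
  induction i with
  | zero => simpa using hx
  | succ k ih => rw [Function.iterate_succ_apply']; exact perS_maps ih

private lemma perS_common {c : ℚ} {x y : ℚ} (hx : x ∈ PerS c) (hy : y ∈ PerS c) :
    ∃ N : ℕ, 1 ≤ N ∧ (phiC c)^[N] x = x ∧ (phiC c)^[N] y = y := by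
  obtain ⟨n, hn, hfx⟩ := hx
  obtain ⟨m, hm, hfy⟩ := hy
  refine ⟨n * m, Nat.one_le_iff_ne_zero.2 (by positivity), ?_, ?_⟩
  · rw [Function.iterate_mul]; exact Function.IsFixedPt.iterate hfx m
  · rw [mul_comm, Function.iterate_mul]; exact Function.IsFixedPt.iterate hfy n

private lemma c_ne_zero {c : ℚ} {d : ℕ} (hd4 : 4 ∣ d) (hden : c.den = d ^ 2) : c ≠ 0 := by
  intro h
  rw [h] at hden
  simp only [Rat.den_ofNat] at hden
  -- 1 = d ^ 2 with 4 ∣ d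
  obtain ⟨k, rfl⟩ := hd4
  have h16 := hden.symm
  cases k with
  | zero => simp at h16
  | succ n =>
    have : (4 * (n + 1)) ^ 2 = 16 * (n + 1) * (n + 1) := by ring
    rw [this] at h16
    nlinarith [h16]

private lemma vc_of_not_dvd {c : ℚ} {d : ℕ} (hden : c.den = d ^ 2) {p : ℕ} (hp : p.Prime)
    (hpd : ¬ p ∣ d) : 0 ≤ padicValRat p c := by
  rw [padicValRat_def]
  have : ¬ p ∣ c.den := by
    rw [hden]
    intro h
    exact hpd (hp.dvd_of_dvd_pow h)
  rw [padicValNat.eq_zero_of_not_dvd this]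
  simp

private lemma vc_of_dvd {c : ℚ} {d : ℕ} (hd : 0 < d) (hden : c.den = d ^ 2) {p : ℕ}
    (hp : p.Prime) (hpd : p ∣ d) :
    padicValRat p c = -(2 * (padicValNat p d : ℤ)) := by
  haveI : Fact p.Prime := ⟨hp⟩
  have hpden : p ∣ c.den := by rw [hden]; exact hpd.trans (dvd_pow_self d two_ne_zero)
  have hnum : ¬ (p : ℤ) ∣ c.num := by
    intro h
    have h1 : p ∣ c.num.natAbs := by rwa [Int.natCast_dvd] at h
    exact hp.ne_one (Nat.dvd_one.mp (c.reduced ▸ Nat.dvd_gcd h1 hpden))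
  rw [padicValRat_def, padicValInt.eq_zero_of_not_dvd hnum, hden]
  have : padicValNat p (d ^ 2) = 2 * padicValNat p d := by
    rw [pow_two, padicValNat.mul hd.ne' hd.ne', two_mul]
  rw [this]
  push_cast
  ring

-- If v_p(x) < 0 and 2 v_p(x) < v_p(c), iterates descend forever: impossible for periodic x.
private lemma no_descent {c : ℚ} (hc : c ≠ 0) {p : ℕ} (hp : p.Prime) {x : ℚ}
    (hx : x ∈ PerS c) :
    ¬ (padicValRat p x < 0 ∧ 2 * padicValRat p x < padicValRat p c) := by
  haveI : Fact p.Prime := ⟨hp⟩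
  rintro ⟨h1, h2⟩
  obtain ⟨n, hn, hfix⟩ := hx
  have key : ∀ i : ℕ, padicValRat p ((phiC c)^[i] x) ≤ padicValRat p x - i ∧
      padicValRat p ((phiC c)^[i] x) < 0 ∧
      2 * padicValRat p ((phiC c)^[i] x) < padicValRat p c := by
    intro i
    induction i with
    | zero => exact ⟨by simp, by simpa using h1, by simpa using h2⟩
    | succ k ih =>
      obtain ⟨ihle, ihneg, ihlt⟩ := ih
      set z := (phiC c)^[k] x with hz
      have hz0 : z ≠ 0 := by
        intro h
        rw [h] at ihneg
        simp [padicValRat.zero] at ihneg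
      have hz2 : padicValRat p (z ^ 2) = 2 * padicValRat p z := by
        rw [padicValRat.pow z]; push_cast; ring
      have hlt : padicValRat p (z ^ 2) < padicValRat p (-c) := by
        rw [hz2, padicValRat.neg]; exact ihlt
      have hsum : z ^ 2 + -c ≠ 0 := by
        intro h
        have hzc : z ^ 2 = c := by linarith
        rw [hzc] at hz2
        have : padicValRat p c < padicValRat p c := by
          calc padicValRat p c = 2 * padicValRat p z := hz2
          _ < padicValRat p c := ihlt
        exact absurd this (lt_irrefl _)
      have hstep : (phiC c)^[k+1] x = z ^ 2 + -c := by
        rw [Function.iterate_succ_apply', ← hz]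
        show z ^ 2 - c = z ^ 2 + -c
        ring
      have hval : padicValRat p ((phiC c)^[k+1] x) = 2 * padicValRat p z := by
        rw [hstep, padicValRat.add_eq_of_lt hsum (pow_ne_zero 2 hz0) (neg_ne_zero.mpr hc) hlt,
          hz2]
      refine ⟨?_, ?_, ?_⟩
      · rw [hval]; push_cast; omega
      · rw [hval]; omega
      · rw [hval]; omega
  obtain ⟨hle, _, _⟩ := key n
  rw [hfix] at hle
  omega

private lemma val_lower_dvd {c : ℚ} {d : ℕ} (hd : 0 < d) (hd4 : 4 ∣ d) (hden : c.den = d ^ 2)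
    {p : ℕ} (hp : p.Prime) (hpd : p ∣ d) {x : ℚ} (hx : x ∈ PerS c) :
    -(padicValNat p d : ℤ) ≤ padicValRat p x := by
  by_contra h
  push_neg at h
  have hw : 1 ≤ padicValNat p d := by
    haveI : Fact p.Prime := ⟨hp⟩
    exact one_le_padicValNat_of_dvd hd.ne' hpd
  refine no_descent (c_ne_zero hd4 hden) hp hx ⟨by omega, ?_⟩
  rw [vc_of_dvd hd hden hp hpd]
  omega

private lemma val_eq_dvd {c : ℚ} {d : ℕ} (hd : 0 < d) (hd4 : 4 ∣ d) (hden : c.den = d ^ 2)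
    {p : ℕ} (hp : p.Prime) (hpd : p ∣ d) {x : ℚ} (hx : x ∈ PerS c) :
    padicValRat p x = -(padicValNat p d : ℤ) := by
  haveI : Fact p.Prime := ⟨hp⟩
  have hc := c_ne_zero hd4 hden
  have hw : 1 ≤ padicValNat p d := one_le_padicValNat_of_dvd hd.ne' hpd
  refine le_antisymm ?_ (val_lower_dvd hd hd4 hden hp hpd hx)
  by_contra h
  push_neg at h
  -- v (phiC c x) = v c = -2w, contradicting the lower bound for phiC c x ∈ PerS c
  have hvc : padicValRat p c = -(2 * (padicValNat p d : ℤ)) := vc_of_dvd hd hden hp hpd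
  have hval : padicValRat p (phiC c x) = padicValRat p c := by
    by_cases hx0 : x = 0
    · have : phiC c x = -c := by rw [hx0]; show (0:ℚ)^2 - c = -c; ring
      rw [this, padicValRat.neg]
    · have hx2 : padicValRat p (x ^ 2) = 2 * padicValRat p x := by
        rw [padicValRat.pow x]; push_cast; ring
      have hlt : padicValRat p (-c) < padicValRat p (x ^ 2) := by
        rw [padicValRat.neg, hx2, hvc]; omega
      have hsum : -c + x ^ 2 ≠ 0 := by
        intro hzero
        have hzc : x ^ 2 = c := by linarith
        rw [hzc, hvc] at hx2
        omega
      have hstep : phiC c x = -c + x ^ 2 := by show x ^ 2 - c = -c + x ^ 2; ring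
      rw [hstep,
        padicValRat.add_eq_of_lt hsum (neg_ne_zero.mpr hc) (pow_ne_zero 2 hx0) hlt,
        padicValRat.neg]
  have hlow := val_lower_dvd hd hd4 hden hp hpd (perS_maps hx)
  rw [hval, hvc] at hlow
  omega

private lemma val_nonneg_not_dvd {c : ℚ} {d : ℕ} (hd4 : 4 ∣ d) (hden : c.den = d ^ 2)
    {p : ℕ} (hp : p.Prime) (hpd : ¬ p ∣ d) {x : ℚ} (hx : x ∈ PerS c) :
    0 ≤ padicValRat p x := by
  by_contra h
  push_neg at h
  have hvc := vc_of_not_dvd hden hp hpd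
  exact no_descent (c_ne_zero hd4 hden) hp hx ⟨h, by omega⟩

private lemma den_eq {c : ℚ} {d : ℕ} (hd : 0 < d) (hd4 : 4 ∣ d) (hden : c.den = d ^ 2)
    {x : ℚ} (hx : x ∈ PerS c) : x.den = d := by
  have h2 : (2:ℕ) ∣ d := dvd_trans ⟨2, rfl⟩ hd4
  have hx0 : x ≠ 0 := by
    intro h
    have := val_eq_dvd hd hd4 hden Nat.prime_two h2 hx
    have hw : 1 ≤ padicValNat 2 d := by
      haveI : Fact (Nat.Prime 2) := ⟨Nat.prime_two⟩
      exact one_le_padicValNat_of_dvd hd.ne' h2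
    rw [h, padicValRat.zero] at this
    omega
  rw [Nat.eq_iff_prime_padicValNat_eq _ _ x.den_nz hd.ne']
  intro q hq
  haveI : Fact q.Prime := ⟨hq⟩
  have hcop : ¬ (q ∣ x.num.natAbs ∧ q ∣ x.den) := by
    rintro ⟨h1, h2d⟩
    exact hq.ne_one (Nat.dvd_one.mp (x.reduced ▸ Nat.dvd_gcd h1 h2d))
  by_cases hqd : q ∣ d
  · have hv := val_eq_dvd hd hd4 hden hq hqd hx
    have hw : 1 ≤ padicValNat q d := one_le_padicValNat_of_dvd hd.ne' hqd
    have hdvdden : q ∣ x.den := by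
      by_contra hnd
      rw [padicValRat_def, padicValNat.eq_zero_of_not_dvd hnd] at hv
      have : (0:ℤ) ≤ padicValInt q x.num := Int.ofNat_nonneg _
      omega
    have hnnum : ¬ (q:ℤ) ∣ x.num := by
      intro hnum
      exact hcop ⟨by rwa [Int.natCast_dvd] at hnum, hdvdden⟩
    rw [padicValRat_def, padicValInt.eq_zero_of_not_dvd hnnum] at hv
    omega
  · rw [padicValNat.eq_zero_of_not_dvd hqd]
    have hv := val_nonneg_not_dvd hd4 hden hq hqd hx
    by_contra hne
    have hdvdden : q ∣ x.den := by
      rw [dvd_iff_padicValNat_ne_zero x.den_nz]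
      omega
    have hnnum : ¬ (q:ℤ) ∣ x.num := fun hnum =>
      hcop ⟨by rwa [Int.natCast_dvd] at hnum, hdvdden⟩
    rw [padicValRat_def, padicValInt.eq_zero_of_not_dvd hnnum] at hv
    have hw : 1 ≤ padicValNat q x.den := one_le_padicValNat_of_dvd x.den_nz hdvdden
    omega
section TestC
variable {c : ℚ} {d : ℕ}

-- numerator as x * d
private lemma num_eq_mul {x : ℚ} (hd : 0 < d) (hxd : x.den = d) : (x.num : ℚ) = x * d := by
  have hd0 : (d:ℚ) ≠ 0 := by positivity
  conv_rhs => rw [← Rat.num_div_den x, hxd]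
  rw [div_mul_cancel₀ _ hd0]

-- distinct elements have distinct numerators (same denominator)
private lemma num_injective {x y : ℚ} (hxd : x.den = d) (hyd : y.den = d) (h : x.num = y.num) :
    x = y := by
  refine Rat.ext h (by rw [hxd, hyd])

-- key step identity
private lemma step_identity (hd : 0 < d) (hd4 : 4 ∣ d) (hden : c.den = d ^ 2)
    {x y : ℚ} (hx : x ∈ PerS c) (hy : y ∈ PerS c) :
    (d : ℤ) * ((phiC c x).num - (phiC c y).num) = (x.num - y.num) * (x.num + y.num) := by
  have hxd := den_eq hd hd4 hden hx
  have hyd := den_eq hd hd4 hden hy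
  have hpxd := den_eq hd hd4 hden (perS_maps hx)
  have hpyd := den_eq hd hd4 hden (perS_maps hy)
  have e1 := num_eq_mul hd hxd
  have e2 := num_eq_mul hd hyd
  have e3 := num_eq_mul hd hpxd
  have e4 := num_eq_mul hd hpyd
  have : ((d : ℤ) * ((phiC c x).num - (phiC c y).num) : ℚ) =
      (((x.num - y.num) * (x.num + y.num) : ℤ) : ℚ) := by
    push_cast
    rw [e1, e2, e3, e4]
    show (d:ℚ) * ((x^2 - c) * d - (y^2 - c) * d) = (x * d - y * d) * (x * d + y * d)
    ring
  exact_mod_cast this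

-- elements stay distinct along orbits
private lemma orbit_ne {x y : ℚ} {N : ℕ} (hNx : (phiC c)^[N] x = x) (hNy : (phiC c)^[N] y = y)
    (hxy : x ≠ y) {i : ℕ} (hi : i ≤ N) : (phiC c)^[i] x ≠ (phiC c)^[i] y := by
  intro h
  apply hxy
  have : (phiC c)^[N - i] ((phiC c)^[i] x) = (phiC c)^[N - i] ((phiC c)^[i] y) := by rw [h]
  rwa [← Function.iterate_add_apply, ← Function.iterate_add_apply, Nat.sub_add_cancel hi,
    hNx, hNy] at this

-- telescoping product
private lemma telescope (hd : 0 < d) (hd4 : 4 ∣ d) (hden : c.den = d ^ 2)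
    {x y : ℚ} (hx : x ∈ PerS c) (hy : y ∈ PerS c) (hxy : x ≠ y)
    {N : ℕ} (hN : 1 ≤ N) (hNx : (phiC c)^[N] x = x) (hNy : (phiC c)^[N] y = y) :
    (∏ i ∈ Finset.range N, (((phiC c)^[i] x).num + ((phiC c)^[i] y).num)) = (d : ℤ) ^ N := by
  have key : ∀ k : ℕ, (d : ℤ) ^ k * (((phiC c)^[k] x).num - ((phiC c)^[k] y).num) =
      (x.num - y.num) * ∏ i ∈ Finset.range k, (((phiC c)^[i] x).num + ((phiC c)^[i] y).num) := by
    intro k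
    induction k with
    | zero => simp
    | succ j ih =>
      rw [Finset.prod_range_succ, pow_succ]
      have hstep := step_identity hd hd4 hden (perS_iter hx j) (perS_iter hy j)
      rw [Function.iterate_succ_apply', Function.iterate_succ_apply']
      calc (d:ℤ) ^ j * d * ((phiC c ((phiC c)^[j] x)).num - (phiC c ((phiC c)^[j] y)).num)
          = (d:ℤ)^j * ((d : ℤ) * ((phiC c ((phiC c)^[j] x)).num - (phiC c ((phiC c)^[j] y)).num)) := by ring
        _ = (d:ℤ)^j * ((((phiC c)^[j] x).num - ((phiC c)^[j] y).num) *
              ((((phiC c)^[j] x).num + ((phiC c)^[j] y).num))) := by rw [hstep]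
        _ = ((d:ℤ)^j * (((phiC c)^[j] x).num - ((phiC c)^[j] y).num)) *
              ((((phiC c)^[j] x).num + ((phiC c)^[j] y).num)) := by ring
        _ = _ := by rw [ih]; ring
  have hk := key N
  rw [hNx, hNy] at hk
  have hne : x.num - y.num ≠ 0 := by
    intro h
    exact hxy (num_injective (den_eq hd hd4 hden hx) (den_eq hd hd4 hden hy) (by omega))
  have : (x.num - y.num) * (d:ℤ)^N = (x.num - y.num) *
      ∏ i ∈ Finset.range N, (((phiC c)^[i] x).num + ((phiC c)^[i] y).num) := by
    rw [← hk]; ring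
  exact (mul_left_cancel₀ hne this).symm

end TestC
section TestD
variable {c : ℚ} {d : ℕ}

-- numerators are odd and coprime to d
private lemma num_coprime {x : ℚ} (hd : 0 < d) (hd4 : 4 ∣ d) (hden : c.den = d ^ 2)
    (hx : x ∈ PerS c) {q : ℕ} (hq : q.Prime) (hqd : q ∣ d) : ¬ (q : ℤ) ∣ x.num := by
  intro h
  have h1 : q ∣ x.num.natAbs := by rwa [Int.natCast_dvd] at h
  have h2 : q ∣ x.den := by rw [den_eq hd hd4 hden hx]; exact hqd
  exact hq.ne_one (Nat.dvd_one.mp (x.reduced ▸ Nat.dvd_gcd h1 h2))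

private lemma num_odd {x : ℚ} (hd : 0 < d) (hd4 : 4 ∣ d) (hden : c.den = d ^ 2)
    (hx : x ∈ PerS c) : ¬ (2 : ℤ) ∣ x.num :=
  num_coprime hd hd4 hden hx Nat.prime_two (dvd_trans ⟨2, rfl⟩ hd4)

-- x + y ≠ 0 for distinct periodic points
private lemma sum_ne_zero {x y : ℚ} (hx : x ∈ PerS c) (hy : y ∈ PerS c) (hxy : x ≠ y) :
    x + y ≠ 0 := by
  intro h
  have hyx : y = -x := by linarith
  obtain ⟨N, hN1, hNx, hNy⟩ := perS_common hx hy
  apply hxy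
  have hphi : phiC c x = phiC c y := by
    show x ^ 2 - c = y ^ 2 - c
    rw [hyx]; ring
  have hN' : N - 1 + 1 = N := by omega
  have h2 : (phiC c)^[N - 1 + 1] x = (phiC c)^[N - 1 + 1] y := by
    rw [Function.iterate_succ_apply, Function.iterate_succ_apply, hphi]
  rw [hN', hNx, hNy] at h2
  exact h2

private lemma num_sum_ne_zero {x y : ℚ} (hd : 0 < d) (hd4 : 4 ∣ d) (hden : c.den = d ^ 2)
    (hx : x ∈ PerS c) (hy : y ∈ PerS c) (hxy : x ≠ y) : x.num + y.num ≠ 0 := by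
  intro h
  apply sum_ne_zero hx hy hxy
  have hxd := den_eq hd hd4 hden hx
  have hyd := den_eq hd hd4 hden hy
  have e1 := num_eq_mul hd hxd
  have e2 := num_eq_mul hd hyd
  have hd0 : (d:ℚ) ≠ 0 := by positivity
  have : ((x.num + y.num : ℤ) : ℚ) = (x + y) * d := by push_cast; rw [e1, e2]; ring
  rw [h] at this
  simp only [Int.cast_zero] at this
  rcases mul_eq_zero.mp this.symm with h' | h'
  · exact h'
  · exact absurd h' hd0

-- any prime dividing the sum of numerators divides d
private lemma prime_dvd_sum_dvd_d (hd : 0 < d) (hd4 : 4 ∣ d) (hden : c.den = d ^ 2)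
    {x y : ℚ} (hx : x ∈ PerS c) (hy : y ∈ PerS c) (hxy : x ≠ y)
    {q : ℕ} (hq : q.Prime) (hdvd : (q : ℤ) ∣ x.num + y.num) : q ∣ d := by
  obtain ⟨N, hN1, hNx, hNy⟩ := perS_common hx hy
  have htel := telescope hd hd4 hden hx hy hxy hN1 hNx hNy
  have h0 : (0:ℕ) ∈ Finset.range N := Finset.mem_range.mpr hN1
  have hdvdprod : (q:ℤ) ∣ ∏ i ∈ Finset.range N, (((phiC c)^[i] x).num + ((phiC c)^[i] y).num) := by
    refine dvd_trans ?_ (Finset.dvd_prod_of_mem _ h0)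
    simpa using hdvd
  rw [htel] at hdvdprod
  have hqint : Prime (q : ℤ) := Nat.prime_iff_prime_int.mp hq
  have := hqint.dvd_of_dvd_pow hdvdprod
  exact_mod_cast this

-- collision pairs have numerator sum = ±2
private lemma collision_sum (hd : 0 < d) (hd4 : 4 ∣ d) (hden : c.den = d ^ 2)
    {x y : ℚ} (hx : x ∈ PerS c) (hy : y ∈ PerS c) (hxy : x ≠ y)
    (hcol : (d : ℤ) ∣ x.num - y.num) : x.num + y.num = 2 ∨ x.num + y.num = -2 := by
  set n := x.num + y.num with hn
  have hodd : ¬ (2:ℤ) ∣ y.num := num_odd hd hd4 hden hy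
  have h4diff : (4:ℤ) ∣ x.num - y.num := dvd_trans (by exact_mod_cast Int.natCast_dvd_natCast.mpr hd4) hcol
  -- n ≡ 2 mod 4
  have hne : n ≠ 0 := num_sum_ne_zero hd hd4 hden hx hy hxy
  -- no odd prime divides n
  have hnoodd : ∀ q : ℕ, q.Prime → q ≠ 2 → ¬ (q:ℤ) ∣ n := by
    intro q hq hq2 hdvd
    have hqd : q ∣ d := prime_dvd_sum_dvd_d hd hd4 hden hx hy hxy hq hdvd
    have hqdiff : (q:ℤ) ∣ x.num - y.num := dvd_trans (Int.natCast_dvd_natCast.mpr hqd) hcol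
    have h2x : (q:ℤ) ∣ 2 * x.num := by
      have : (2:ℤ) * x.num = n + (x.num - y.num) := by ring
      rw [this]; exact dvd_add hdvd hqdiff
    have hqint : Prime (q : ℤ) := Nat.prime_iff_prime_int.mp hq
    rcases hqint.dvd_mul.mp h2x with h' | h'
    · have hq2' : q ∣ 2 := by exact_mod_cast h'
      exact hq2 ((Nat.prime_dvd_prime_iff_eq hq Nat.prime_two).mp hq2')
    · exact num_coprime hd hd4 hden hx hq hqd h'
  -- 2 ∣ n, ¬ 4 ∣ n
  have h2n : (2:ℤ) ∣ n := by
    rcases Int.even_or_odd x.num with ⟨k, hk⟩ | ⟨k, hk⟩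
    · exact absurd ⟨k, by omega⟩ (num_odd hd hd4 hden hx)
    · rcases Int.even_or_odd y.num with ⟨l, hl⟩ | ⟨l, hl⟩
      · exact absurd ⟨l, by omega⟩ hodd
      · exact ⟨k + l + 1, by omega⟩
  have h4n : ¬ (4:ℤ) ∣ n := by
    intro h4
    rcases Int.even_or_odd y.num with ⟨l, hl⟩ | ⟨l, hl⟩
    · exact absurd ⟨l, by omega⟩ hodd
    · omega
  -- natAbs n = 2
  have habs : n.natAbs = 2 := by
    have hna : n.natAbs ≠ 0 := Int.natAbs_ne_zero.mpr hne
    have h2na : 2 ∣ n.natAbs := by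
      simpa using Int.natAbs_dvd_natAbs.mpr h2n
    have h4na : ¬ 4 ∣ n.natAbs := by
      intro h
      exact h4n (Int.natAbs_dvd_natAbs.mp (by simpa using h))
    obtain ⟨t, ht⟩ := h2na
    have htodd : ¬ 2 ∣ t := fun ⟨s, hs⟩ => h4na ⟨s, by omega⟩
    have ht1 : t = 1 := by
      rw [Nat.eq_one_iff_not_exists_prime_dvd]
      intro q hq hqt
      rcases eq_or_ne q 2 with rfl | hq2
      · exact htodd hqt
      · refine hnoodd q hq hq2 (Int.natAbs_dvd_natAbs.mp ?_)
        have hqn : q ∣ n.natAbs := ht ▸ hqt.mul_left 2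
        simpa using hqn
    omega
  rcases Int.natAbs_eq n with he | he
  · left; omega
  · right; omega

end TestD
section TestE

private lemma natAbs_pow2 {n : ℤ} (hne : n ≠ 0)
    (h : ∀ q : ℕ, q.Prime → q ≠ 2 → ¬ (q:ℤ) ∣ n) : ∃ k : ℕ, n.natAbs = 2 ^ k := by
  have hpos : n.natAbs ≠ 0 := Int.natAbs_ne_zero.mpr hne
  have huniq : ∀ {q : ℕ}, q.Prime → q ∣ n.natAbs → q = 2 := by
    intro q hq hqd
    by_contra hq2
    exact h q hq hq2 (Int.natAbs_dvd_natAbs.mp (by simpa using hqd))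
  exact ⟨n.natAbs.primeFactorsList.length, Nat.eq_prime_pow_of_unique_prime_dvd hpos huniq⟩

private lemma pow_le_of_eq {k : ℕ} {m : ℕ} (h : 2 ^ k = m) (hm : m ≤ 12) : k ≤ 3 := by
  by_contra hk
  push_neg at hk
  have : 2 ^ 4 ≤ 2 ^ k := Nat.pow_le_pow_right (by norm_num) (by omega)
  omega

private lemma dioph {n₁ n₂ : ℤ} (hsum : n₁ + n₂ = 4) (h1 : (2:ℤ) ∣ n₁) (h2 : (2:ℤ) ∣ n₂)
    (hp1 : ∃ k : ℕ, n₁.natAbs = 2 ^ k) (hp2 : ∃ k : ℕ, n₂.natAbs = 2 ^ k) :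
    (n₁ = 2 ∧ n₂ = 2) ∨ (n₁ = -4 ∧ n₂ = 8) ∨ (n₁ = 8 ∧ n₂ = -4) := by
  obtain ⟨k₁, hk₁⟩ := hp1
  obtain ⟨k₂, hk₂⟩ := hp2
  -- |n₁| ≤ 2^3 or the pair is impossible: bound both via sum
  have habs1 : n₁ = (2:ℤ) ^ k₁ ∨ n₁ = -((2:ℤ) ^ k₁) := by
    rcases Int.natAbs_eq n₁ with he | he
    · left; rw [he, hk₁]; push_cast; ring
    · right; rw [he, hk₁]; push_cast; ring
  have habs2 : n₂ = (2:ℤ) ^ k₂ ∨ n₂ = -((2:ℤ) ^ k₂) := by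
    rcases Int.natAbs_eq n₂ with he | he
    · left; rw [he, hk₂]; push_cast; ring
    · right; rw [he, hk₂]; push_cast; ring
  have hb1 : k₁ ≤ 3 ∨ k₂ ≤ 3 := by
    by_contra hb
    push_neg at hb
    have d1 : (16:ℤ) ∣ n₁ := by
      have : (16:ℤ) = 2 ^ 4 := by norm_num
      rcases habs1 with h' | h' <;> rw [h'] <;> rw [this]
      · exact pow_dvd_pow 2 (by omega)
      · exact (pow_dvd_pow 2 (by omega : 4 ≤ k₁)).neg_right
    have d2 : (16:ℤ) ∣ n₂ := by
      have : (16:ℤ) = 2 ^ 4 := by norm_num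
      rcases habs2 with h' | h' <;> rw [h'] <;> rw [this]
      · exact pow_dvd_pow 2 (by omega)
      · exact (pow_dvd_pow 2 (by omega : 4 ≤ k₂)).neg_right
    omega
  -- so both k's are ≤ 3 (the other via the sum)
  have hb2 : k₁ ≤ 3 ∧ k₂ ≤ 3 := by
    rcases hb1 with h | h
    · refine ⟨h, ?_⟩
      have : n₁.natAbs ≤ 8 := by
        calc n₁.natAbs = 2 ^ k₁ := hk₁
        _ ≤ 2 ^ 3 := Nat.pow_le_pow_right (by norm_num) h
        _ = 8 := by norm_num
      have hn2abs : n₂.natAbs ≤ 12 := by omega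
      exact pow_le_of_eq hk₂.symm (by omega)
    · refine ⟨?_, h⟩
      have : n₂.natAbs ≤ 8 := by
        calc n₂.natAbs = 2 ^ k₂ := hk₂
        _ ≤ 2 ^ 3 := Nat.pow_le_pow_right (by norm_num) h
        _ = 8 := by norm_num
      have hn1abs : n₁.natAbs ≤ 12 := by omega
      exact pow_le_of_eq hk₁.symm (by omega)
  obtain ⟨hbb1, hbb2⟩ := hb2
  interval_cases k₁ <;> interval_cases k₂ <;>
    rcases habs1 with h' | h' <;> rcases habs2 with h'' | h'' <;> omega

end TestE
section TestF
variable {c : ℚ} {d : ℕ}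

private lemma pair_sum_pow2 (hd : 0 < d) (hd4 : 4 ∣ d) (hden : c.den = d ^ 2)
    {ε : ℤ} (hε : ε = 1 ∨ ε = -1)
    {x x' : ℚ} (hx : x ∈ PerS c) (hx' : x' ∈ PerS c) (hne : x ≠ x')
    (hx2 : ∃ y, y ∈ PerS c ∧ (d:ℤ) ∣ x.num - y.num ∧ x.num + y.num = 2 * ε)
    (hx'2 : ∃ y', y' ∈ PerS c ∧ (d:ℤ) ∣ x'.num - y'.num ∧ x'.num + y'.num = 2 * ε) :
    ∃ k : ℕ, (x.num + x'.num).natAbs = 2 ^ k := by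
  obtain ⟨y, hy, hdy, hsy⟩ := hx2
  obtain ⟨y', hy', hdy', hsy'⟩ := hx'2
  refine natAbs_pow2 (num_sum_ne_zero hd hd4 hden hx hx' hne) ?_
  intro q hq hq2 hdvd
  by_cases hqd : q ∣ d
  · have hqi : Prime (q:ℤ) := Nat.prime_iff_prime_int.mp hq
    have hq2' : ¬ (q:ℤ) ∣ 2 := by
      intro h
      exact hq2 ((Nat.prime_dvd_prime_iff_eq hq Nat.prime_two).mp (by exact_mod_cast h))
    have hdq : (q:ℤ) ∣ (d:ℤ) := Int.natCast_dvd_natCast.mpr hqd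
    have h1 : (q:ℤ) ∣ 2 * (x.num - ε) := by
      have : 2 * (x.num - ε) = (x.num - y.num) + ((x.num + y.num) - 2 * ε) := by ring
      rw [this, hsy]
      simpa using hdq.trans hdy
    have h2 : (q:ℤ) ∣ 2 * (x'.num - ε) := by
      have : 2 * (x'.num - ε) = (x'.num - y'.num) + ((x'.num + y'.num) - 2 * ε) := by ring
      rw [this, hsy']
      simpa using hdq.trans hdy'
    have h1' : (q:ℤ) ∣ x.num - ε := ((hqi.dvd_mul.mp h1).resolve_left hq2')
    have h2' : (q:ℤ) ∣ x'.num - ε := ((hqi.dvd_mul.mp h2).resolve_left hq2')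
    have h3 : (q:ℤ) ∣ 2 * ε := by
      have : 2 * ε = (x.num + x'.num) - (x.num - ε) - (x'.num - ε) := by ring
      rw [this]
      exact dvd_sub (dvd_sub hdvd h1') h2'
    have : (q:ℤ) ∣ 2 := by
      rcases hε with rfl | rfl
      · simpa using h3
      · simpa using h3.neg_right
    exact hq2' this
  · exact hqd (prime_dvd_sum_dvd_d hd hd4 hden hx hx' hne hq hdvd)

private lemma num_even_sum {x y : ℚ} (hd : 0 < d) (hd4 : 4 ∣ d) (hden : c.den = d ^ 2)
    (hx : x ∈ PerS c) (hy : y ∈ PerS c) : (2:ℤ) ∣ x.num + y.num := by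
  have h1 := num_odd hd hd4 hden hx
  have h2 := num_odd hd hd4 hden hy
  omega

-- at most one collision pair for each sign
private lemma unique_pair (hd : 0 < d) (hd4 : 4 ∣ d) (hden : c.den = d ^ 2)
    {ε : ℤ} (hε : ε = 1 ∨ ε = -1)
    {x y x' y' : ℚ} (hx : x ∈ PerS c) (hy : y ∈ PerS c) (hx' : x' ∈ PerS c) (hy' : y' ∈ PerS c)
    (hxy : x ≠ y) (hxy' : x' ≠ y')
    (hdxy : (d:ℤ) ∣ x.num - y.num) (hdxy' : (d:ℤ) ∣ x'.num - y'.num)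
    (hsxy : x.num + y.num = 2 * ε) (hsxy' : x'.num + y'.num = 2 * ε)
    (hcross : ¬ (d:ℤ) ∣ x.num - x'.num) : False := by
  -- all cross differences are not divisible by d
  have hcross2 : ¬ (d:ℤ) ∣ y.num - y'.num := by
    intro h
    apply hcross
    have : x.num - x'.num = (x.num - y.num) - (x'.num - y'.num) + (y.num - y'.num) := by ring
    rw [this]
    exact dvd_add (dvd_sub hdxy hdxy') h
  have hcross3 : ¬ (d:ℤ) ∣ x.num - y'.num := by
    intro h
    apply hcross
    have : x.num - x'.num = (x.num - y'.num) + (y'.num - x'.num) := by ring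
    rw [this]
    exact dvd_add h (dvd_sub_comm.mp hdxy')
  have hcross4 : ¬ (d:ℤ) ∣ y.num - x'.num := by
    intro h
    apply hcross
    have : x.num - x'.num = (x.num - y.num) + (y.num - x'.num) := by ring
    rw [this]
    exact dvd_add hdxy h
  have hd0 : (0:ℤ) ∣ (0:ℤ) := dvd_refl 0
  -- distinctness
  have hne1 : x ≠ x' := fun h => hcross (by rw [h]; simp)
  have hne2 : y ≠ y' := fun h => hcross2 (by rw [h]; simp)
  have hne3 : x ≠ y' := fun h => hcross3 (by rw [h]; simp)
  have hne4 : y ≠ x' := fun h => hcross4 (by rw [h]; simp)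
  -- the four sums
  set n₁ := x.num + x'.num with hn₁
  set n₂ := y.num + y'.num with hn₂
  set m₁ := x.num + y'.num with hm₁
  set m₂ := y.num + x'.num with hm₂
  have hp1 : ∃ k : ℕ, n₁.natAbs = 2 ^ k :=
    pair_sum_pow2 hd hd4 hden hε hx hx' hne1 ⟨y, hy, hdxy, hsxy⟩ ⟨y', hy', hdxy', hsxy'⟩
  have hp2 : ∃ k : ℕ, n₂.natAbs = 2 ^ k := by
    refine pair_sum_pow2 hd hd4 hden hε hy hy' hne2 ⟨x, hx, ?_, by omega⟩ ⟨x', hx', ?_, by omega⟩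
    · exact dvd_sub_comm.mp hdxy
    · exact dvd_sub_comm.mp hdxy'
  have hp3 : ∃ k : ℕ, m₁.natAbs = 2 ^ k :=
    pair_sum_pow2 hd hd4 hden hε hx hy' hne3 ⟨y, hy, hdxy, hsxy⟩
      ⟨x', hx', dvd_sub_comm.mp hdxy', by omega⟩
  have hp4 : ∃ k : ℕ, m₂.natAbs = 2 ^ k :=
    pair_sum_pow2 hd hd4 hden hε hy hx' hne4
      ⟨x, hx, dvd_sub_comm.mp hdxy, by omega⟩
      ⟨y', hy', hdxy', hsxy'⟩
  have hev1 := num_even_sum hd hd4 hden hx hx'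
  have hev2 := num_even_sum hd hd4 hden hy hy'
  have hev3 := num_even_sum hd hd4 hden hx hy'
  have hev4 := num_even_sum hd hd4 hden hy hx'
  have hnumne1 : x.num ≠ y.num := fun h => hxy (num_injective (den_eq hd hd4 hden hx) (den_eq hd hd4 hden hy) h)
  have hnumne2 : x'.num ≠ y'.num := fun h => hxy' (num_injective (den_eq hd hd4 hden hx') (den_eq hd hd4 hden hy') h)
  rcases hε with rfl | rfl
  · have hd1 := dioph (show n₁ + n₂ = 4 by omega) hev1 hev2 hp1 hp2
    have hd2 := dioph (show m₁ + m₂ = 4 by omega) hev3 hev4 hp3 hp4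
    rcases hd1 with ⟨e1, e2⟩ | hc1
    · apply hcross4
      have : y.num - x'.num = 0 := by omega
      rw [this]
      exact dvd_zero _
    rcases hd2 with ⟨e1, e2⟩ | hc2
    · apply hcross2
      have : y.num - y'.num = 0 := by omega
      rw [this]
      exact dvd_zero _
    rcases hc1 with ⟨e1, e2⟩ | ⟨e1, e2⟩ <;> rcases hc2 with ⟨f1, f2⟩ | ⟨f1, f2⟩ <;> omega
  · have hp1' : ∃ k : ℕ, (-n₁).natAbs = 2 ^ k := by simpa [Int.natAbs_neg] using hp1
    have hp2' : ∃ k : ℕ, (-n₂).natAbs = 2 ^ k := by simpa [Int.natAbs_neg] using hp2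
    have hp3' : ∃ k : ℕ, (-m₁).natAbs = 2 ^ k := by simpa [Int.natAbs_neg] using hp3
    have hp4' : ∃ k : ℕ, (-m₂).natAbs = 2 ^ k := by simpa [Int.natAbs_neg] using hp4
    have hd1 := dioph (show -n₁ + -n₂ = 4 by omega) (by omega) (by omega) hp1' hp2'
    have hd2 := dioph (show -m₁ + -m₂ = 4 by omega) (by omega) (by omega) hp3' hp4'
    rcases hd1 with ⟨e1, e2⟩ | hc1
    · apply hcross4
      have : y.num - x'.num = 0 := by omega
      rw [this]
      exact dvd_zero _
    rcases hd2 with ⟨e1, e2⟩ | hc2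
    · apply hcross2
      have : y.num - y'.num = 0 := by omega
      rw [this]
      exact dvd_zero _
    rcases hc1 with ⟨e1, e2⟩ | ⟨e1, e2⟩ <;> rcases hc2 with ⟨f1, f2⟩ | ⟨f1, f2⟩ <;> omega

end TestF
section TestG
variable {c : ℚ} {d : ℕ}

-- fibers have at most 2 elements
private lemma three_collide (hd : 0 < d) (hd4 : 4 ∣ d) (hden : c.den = d ^ 2)
    {x y z : ℚ} (hx : x ∈ PerS c) (hy : y ∈ PerS c) (hz : z ∈ PerS c)
    (hxy : x ≠ y) (hxz : x ≠ z) (hyz : y ≠ z)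
    (h1 : (d:ℤ) ∣ x.num - y.num) (h2 : (d:ℤ) ∣ x.num - z.num) : False := by
  have h3 : (d:ℤ) ∣ y.num - z.num := by
    have : y.num - z.num = (x.num - z.num) - (x.num - y.num) := by ring
    rw [this]; exact dvd_sub h2 h1
  have s1 := collision_sum hd hd4 hden hx hy hxy h1
  have s2 := collision_sum hd hd4 hden hx hz hxz h2
  have s3 := collision_sum hd hd4 hden hy hz hyz h3
  have n1 : x.num ≠ y.num := fun h => hxy (num_injective (den_eq hd hd4 hden hx) (den_eq hd hd4 hden hy) h)
  have n2 : x.num ≠ z.num := fun h => hxz (num_injective (den_eq hd hd4 hden hx) (den_eq hd hd4 hden hz) h)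
  have n3 : y.num ≠ z.num := fun h => hyz (num_injective (den_eq hd hd4 hden hy) (den_eq hd hd4 hden hz) h)
  omega

-- two same-sign collision pairs in different residue classes: impossible
private lemma same_sign_contra (hd : 0 < d) (hd4 : 4 ∣ d) (hden : c.den = d ^ 2)
    {x y x' y' : ℚ} (hx : x ∈ PerS c) (hy : y ∈ PerS c) (hx' : x' ∈ PerS c) (hy' : y' ∈ PerS c)
    (hxy : x ≠ y) (hxy' : x' ≠ y')
    (hdxy : (d:ℤ) ∣ x.num - y.num) (hdxy' : (d:ℤ) ∣ x'.num - y'.num)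
    {s : ℤ} (hs : s = 2 ∨ s = -2)
    (hsxy : x.num + y.num = s) (hsxy' : x'.num + y'.num = s)
    (hcross : ¬ (d:ℤ) ∣ x.num - x'.num) : False := by
  rcases hs with rfl | rfl
  · exact unique_pair hd hd4 hden (Or.inl rfl) hx hy hx' hy' hxy hxy' hdxy hdxy'
      (by omega) (by omega) hcross
  · exact unique_pair hd hd4 hden (Or.inr rfl) hx hy hx' hy' hxy hxy' hdxy hdxy'
      (by omega) (by omega) hcross

end TestG

/-- Let `den c = d²` with `4 ∣ d`, `d > 0`, and suppose the set of rational
periodic points of `φ_c(t) = t² - c` is finite. If `m` is the number of residue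
classes modulo `d` occupied by the numerators of the rational periodic points,
then `m ≤ |Per(φ_c)| ≤ m + 2`. -/
theorem stmt_15 (c : ℚ) (d : ℕ) (hd : 0 < d) (h4 : 4 ∣ d) (hden : c.den = d ^ 2)
    (hfin : {x : ℚ | ∃ n : ℕ, 1 ≤ n ∧ (fun t : ℚ => t ^ 2 - c)^[n] x = x}.Finite) :
    ((fun x : ℚ => ((x.num : ZMod d))) ''
        {x : ℚ | ∃ n : ℕ, 1 ≤ n ∧ (fun t : ℚ => t ^ 2 - c)^[n] x = x}).ncard ≤
      {x : ℚ | ∃ n : ℕ, 1 ≤ n ∧ (fun t : ℚ => t ^ 2 - c)^[n] x = x}.ncard ∧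
    {x : ℚ | ∃ n : ℕ, 1 ≤ n ∧ (fun t : ℚ => t ^ 2 - c)^[n] x = x}.ncard ≤
      ((fun x : ℚ => ((x.num : ZMod d))) ''
        {x : ℚ | ∃ n : ℕ, 1 ≤ n ∧ (fun t : ℚ => t ^ 2 - c)^[n] x = x}).ncard + 2 := by
  classical
  constructor
  · exact Set.ncard_image_le hfin
  set S : Set ℚ := {x : ℚ | ∃ n : ℕ, 1 ≤ n ∧ (fun t : ℚ => t ^ 2 - c)^[n] x = x} with hSdef
  set f : ℚ → ZMod d := fun x => ((x.num : ZMod d)) with hfdef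
  have himfin : (f '' S).Finite := hfin.image f
  rw [Set.ncard_eq_toFinset_card S hfin, Set.ncard_eq_toFinset_card _ himfin,
      Set.Finite.toFinset_image f hfin himfin]
  set F := hfin.toFinset with hFdef
  have hmem : ∀ {x : ℚ}, x ∈ F → x ∈ PerS c := fun hx => (Set.Finite.mem_toFinset hfin).mp hx
  have hbridge : ∀ {u v : ℚ}, f u = f v → (d:ℤ) ∣ u.num - v.num := by
    intro u v h
    exact dvd_sub_comm.mp (Int.ModEq.dvd ((ZMod.intCast_eq_intCast_iff _ _ _).mp h))
  have hbridge' : ∀ {u v : ℚ}, (d:ℤ) ∣ u.num - v.num → f u = f v := by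
    intro u v h
    exact (ZMod.intCast_eq_intCast_iff _ _ _).mpr (Int.modEq_iff_dvd.mpr (dvd_sub_comm.mp h))
  have hsum : F.card = ∑ b ∈ F.image f, (F.filter (fun x => f x = b)).card :=
    Finset.card_eq_sum_card_fiberwise (fun x hx => Finset.mem_image_of_mem f hx)
  have hfib2 : ∀ b, (F.filter (fun x => f x = b)).card ≤ 2 := by
    intro b
    by_contra hgt
    push_neg at hgt
    obtain ⟨u, v, w, hu, hv, hw, huv, huw, hvw⟩ := Finset.two_lt_card_iff.mp hgt
    simp only [Finset.mem_filter] at hu hv hw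
    exact three_collide hd h4 hden (hmem hu.1) (hmem hv.1) (hmem hw.1) huv huw hvw
      (hbridge (hu.2.trans hv.2.symm)) (hbridge (hu.2.trans hw.2.symm))
  set Big := (F.image f).filter (fun b => 2 ≤ (F.filter (fun x => f x = b)).card) with hBigdef
  have hBig : Big.card ≤ 2 := by
    by_contra hgt
    push_neg at hgt
    obtain ⟨b₁, b₂, b₃, hb₁, hb₂, hb₃, h12, h13, h23⟩ := Finset.two_lt_card_iff.mp hgt
    have hget : ∀ b ∈ Big, ∃ u v : ℚ, u ∈ PerS c ∧ v ∈ PerS c ∧ u ≠ v ∧ f u = b ∧ f v = b ∧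
        (d:ℤ) ∣ u.num - v.num ∧ (u.num + v.num = 2 ∨ u.num + v.num = -2) := by
      intro b hb
      rw [hBigdef, Finset.mem_filter] at hb
      obtain ⟨u, v, hu, hv, huv⟩ := Finset.one_lt_card_iff.mp (by omega : 1 < (F.filter (fun x => f x = b)).card)
      simp only [Finset.mem_filter] at hu hv
      have hdiff := hbridge (hu.2.trans hv.2.symm)
      exact ⟨u, v, hmem hu.1, hmem hv.1, huv, hu.2, hv.2, hdiff,
        collision_sum hd h4 hden (hmem hu.1) (hmem hv.1) huv hdiff⟩
    obtain ⟨u₁, v₁, hu₁, hv₁, hne₁, hf₁, hg₁, hd₁, hs₁⟩ := hget b₁ hb₁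
    obtain ⟨u₂, v₂, hu₂, hv₂, hne₂, hf₂, hg₂, hd₂, hs₂⟩ := hget b₂ hb₂
    obtain ⟨u₃, v₃, hu₃, hv₃, hne₃, hf₃, hg₃, hd₃, hs₃⟩ := hget b₃ hb₃
    have hc12 : ¬ (d:ℤ) ∣ u₁.num - u₂.num := fun h => h12 (by rw [← hf₁, hbridge' h, hf₂])
    have hc13 : ¬ (d:ℤ) ∣ u₁.num - u₃.num := fun h => h13 (by rw [← hf₁, hbridge' h, hf₃])
    have hc23 : ¬ (d:ℤ) ∣ u₂.num - u₃.num := fun h => h23 (by rw [← hf₂, hbridge' h, hf₃])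
    rcases hs₁ with e1 | e1 <;> rcases hs₂ with e2 | e2 <;> rcases hs₃ with e3 | e3
    · exact same_sign_contra hd h4 hden hu₁ hv₁ hu₂ hv₂ hne₁ hne₂ hd₁ hd₂ (Or.inl rfl) e1 e2 hc12
    · exact same_sign_contra hd h4 hden hu₁ hv₁ hu₂ hv₂ hne₁ hne₂ hd₁ hd₂ (Or.inl rfl) e1 e2 hc12
    · exact same_sign_contra hd h4 hden hu₁ hv₁ hu₃ hv₃ hne₁ hne₃ hd₁ hd₃ (Or.inl rfl) e1 e3 hc13
    · exact same_sign_contra hd h4 hden hu₂ hv₂ hu₃ hv₃ hne₂ hne₃ hd₂ hd₃ (Or.inr rfl) e2 e3 hc23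
    · exact same_sign_contra hd h4 hden hu₂ hv₂ hu₃ hv₃ hne₂ hne₃ hd₂ hd₃ (Or.inl rfl) e2 e3 hc23
    · exact same_sign_contra hd h4 hden hu₁ hv₁ hu₃ hv₃ hne₁ hne₃ hd₁ hd₃ (Or.inr rfl) e1 e3 hc13
    · exact same_sign_contra hd h4 hden hu₁ hv₁ hu₂ hv₂ hne₁ hne₂ hd₁ hd₂ (Or.inr rfl) e1 e2 hc12
    · exact same_sign_contra hd h4 hden hu₁ hv₁ hu₂ hv₂ hne₁ hne₂ hd₁ hd₂ (Or.inr rfl) e1 e2 hc12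
  -- final counting
  have hsplit := Finset.card_filter_add_card_filter_not
    (s := F.image f) (p := fun b => 2 ≤ (F.filter (fun x => f x = b)).card)
  have hb1 : ∑ b ∈ Big, (F.filter (fun x => f x = b)).card ≤ Big.card * 2 := by
    calc ∑ b ∈ Big, (F.filter (fun x => f x = b)).card ≤ ∑ _b ∈ Big, 2 :=
      Finset.sum_le_sum (fun b _ => hfib2 b)
    _ = Big.card * 2 := by rw [Finset.sum_const, smul_eq_mul]
  have hb2 : ∑ b ∈ (F.image f).filter (fun b => ¬ 2 ≤ (F.filter (fun x => f x = b)).card),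
      (F.filter (fun x => f x = b)).card ≤
      ((F.image f).filter (fun b => ¬ 2 ≤ (F.filter (fun x => f x = b)).card)).card * 1 := by
    refine le_trans (Finset.sum_le_sum ?_) (by rw [Finset.sum_const, smul_eq_mul])
    intro b hb
    rw [Finset.mem_filter] at hb
    omega
  have htot : F.card ≤ Big.card * 2 +
      ((F.image f).filter (fun b => ¬ 2 ≤ (F.filter (fun x => f x = b)).card)).card * 1 := by
    rw [hsum, ← Finset.sum_filter_add_sum_filter_not (F.image f)
      (fun b => 2 ≤ (F.filter (fun x => f x = b)).card)]
    exact add_le_add hb1 hb2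
  have hsplit' : Big.card +
      ((F.image f).filter (fun b => ¬ 2 ≤ (F.filter (fun x => f x = b)).card)).card =
      (F.image f).card := by
    rw [hBigdef]
    simpa using hsplit
  omega
end
end

section
/- Let c ∈ ℚ and let (x₁, …, xₙ) be a cycle of φ_c of length n ≥ 3, with common denominator d = den(x₁). If d is not divisible by 3, then all the numerators num(x₁), …, num(xₙ) are congruent to one another modulo 3 and are nonzero modulo 3; that is, the numerators of the cycle reduce modulo 3 to exactly one nonzero residue class. -/
section Aux

variable {p : ℕ} [hp : Fact p.Prime]

lemma aux_not_dvd_num {q : ℚ} (h : p ∣ q.den) : ¬ (p : ℤ) ∣ q.num := by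
  intro hd
  have hd' : p ∣ q.num.natAbs := by
    have := Int.natAbs_dvd_natAbs.mpr hd; simpa using this
  have h1 : p ∣ Nat.gcd q.num.natAbs q.den := Nat.dvd_gcd hd' h
  rw [Nat.Coprime.gcd_eq_one q.reduced] at h1
  exact hp.out.ne_one (Nat.dvd_one.mp h1)

lemma aux_valden_zero {q : ℚ} (h : padicNorm p q ≤ 1) : padicValNat p q.den = 0 := by
  by_cases hq : q = 0
  · subst hq; simp
  by_contra h0
  have hdvd : p ∣ q.den := dvd_of_one_le_padicValNat (by omega)
  have hnum : padicValInt p q.num = 0 := padicValInt.eq_zero_of_not_dvd (aux_not_dvd_num hdvd)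
  have hv : padicValRat p q = -(padicValNat p q.den : ℤ) := by
    rw [padicValRat_def, hnum]; simp
  have hnorm : padicNorm p q = (p : ℚ) ^ (-padicValRat p q) := padicNorm.eq_zpow_of_nonzero hq
  have hlt : (1 : ℚ) < (p : ℚ) ^ (-padicValRat p q) := by
    apply one_lt_zpow₀ (by exact_mod_cast hp.out.one_lt)
    rw [hv]; omega
  rw [hnorm] at h; linarith

lemma aux_valden_eq {q r : ℚ} (hq : 1 < padicNorm p q) (hr : 1 < padicNorm p r)
    (h : padicNorm p q = padicNorm p r) : padicValNat p q.den = padicValNat p r.den := by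
  have hq0 : q ≠ 0 := by rintro rfl; simp [padicNorm.zero] at hq; linarith
  have hr0 : r ≠ 0 := by rintro rfl; simp [padicNorm.zero] at hr; linarith
  have hnq : padicNorm p q = (p : ℚ) ^ (-padicValRat p q) := padicNorm.eq_zpow_of_nonzero hq0
  have hnr : padicNorm p r = (p : ℚ) ^ (-padicValRat p r) := padicNorm.eq_zpow_of_nonzero hr0
  have hp1 : (1 : ℚ) < (p : ℚ) := by exact_mod_cast hp.out.one_lt
  have hveq : padicValRat p q = padicValRat p r := by
    have := h; rw [hnq, hnr] at this
    have := zpow_right_injective₀ (by linarith : (0:ℚ) < p) (by linarith) this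
    omega
  -- valuation is negative
  have hvneg : ∀ s : ℚ, s ≠ 0 → 1 < padicNorm p s → padicValRat p s < 0 := by
    intro s hs0 hs
    rw [padicNorm.eq_zpow_of_nonzero hs0] at hs
    by_contra hle
    push_neg at hle
    have : (p:ℚ) ^ (-padicValRat p s) ≤ 1 := zpow_le_one_of_nonpos₀ (le_of_lt hp1) (by omega)
    linarith
  have key : ∀ s : ℚ, s ≠ 0 → padicValRat p s < 0 →
      (padicValNat p s.den : ℤ) = -padicValRat p s := by
    intro s hs0 hv
    have hd : padicValNat p s.den ≠ 0 := by
      intro hz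
      rw [padicValRat_def, hz] at hv
      simp only [Nat.cast_zero, sub_zero] at hv
      omega
    have hdvd : p ∣ s.den := dvd_of_one_le_padicValNat (by omega)
    have hnum : padicValInt p s.num = 0 := padicValInt.eq_zero_of_not_dvd (aux_not_dvd_num hdvd)
    rw [padicValRat_def, hnum]; ring
  have e1 := key q hq0 (hvneg q hq0 hq)
  have e2 := key r hr0 (hvneg r hr0 hr)
  omega

end Aux

section Norm

variable {p : ℕ} [hp : Fact p.Prime]

lemma aux_norm_sq (q : ℚ) : padicNorm p (q ^ 2) = padicNorm p q ^ 2 := by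
  rw [sq, sq, padicNorm.mul]

lemma aux_norm_sub_eq {a b : ℚ} (h : padicNorm p a ≠ padicNorm p b) :
    padicNorm p (a - b) = max (padicNorm p a) (padicNorm p b) := by
  rw [sub_eq_add_neg, padicNorm.add_eq_max_of_ne (by rwa [padicNorm.neg]), padicNorm.neg]

lemma aux_den_per_prime (c : ℚ) (n : ℕ) (hn : 0 < n) (y : ℕ → ℚ)
    (hy : ∀ i, y (i + 1) = y i ^ 2 - c) (hper : ∀ i, y (i + n) = y i) (i : ℕ) :
    padicValNat p (y i).den = padicValNat p (y 0).den := by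
  -- the one-step growth lemma
  have step : ∀ k, 1 ≤ padicNorm p (y k) → padicNorm p c < padicNorm p (y k) ^ 2 →
      padicNorm p (y (k + 1)) = padicNorm p (y k) ^ 2 := by
    intro k h1 h2
    have hne : padicNorm p (y k ^ 2) ≠ padicNorm p c := by
      rw [aux_norm_sq]; intro h; rw [h] at h2; linarith
    rw [hy k, aux_norm_sub_eq hne, aux_norm_sq, max_eq_left (le_of_lt h2)]
  -- no point can have norm > max 1 (norm c)
  have key : ∀ j, 1 < padicNorm p (y j) → padicNorm p c < padicNorm p (y j) → False := by
    intro j h1 h2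
    have grow : ∀ m, (1 < padicNorm p (y (j + m)) ∧ padicNorm p c < padicNorm p (y (j + m))) ∧
        (0 < m → padicNorm p (y j) < padicNorm p (y (j + m))) := by
      intro m
      induction m with
      | zero => exact ⟨⟨h1, h2⟩, by omega⟩
      | succ m ih =>
        obtain ⟨⟨ha, hb⟩, hc⟩ := ih
        have hs := step (j + m) (le_of_lt ha) (by nlinarith)
        rw [show j + (m + 1) = j + m + 1 from rfl]
        have hlt : padicNorm p (y (j + m)) < padicNorm p (y (j + m + 1)) := by
          rw [hs]; nlinarith
        refine ⟨⟨by rw [hs]; nlinarith, by rw [hs]; nlinarith⟩, fun _ => ?_⟩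
        rcases Nat.eq_zero_or_pos m with hm | hm
        · subst hm; simpa using hlt
        · exact lt_trans (hc hm) hlt
    have := (grow n).2 hn
    rw [hper j] at this
    exact lt_irrefl _ this
  by_cases hall : ∀ j, padicNorm p (y j) ≤ 1
  · rw [aux_valden_zero (hall i), aux_valden_zero (hall 0)]
  push_neg at hall
  obtain ⟨j, hj⟩ := hall
  have hc : 1 < padicNorm p c := by
    rcases le_or_gt (padicNorm p (y j)) (padicNorm p c) with h | h
    · linarith
    · exact absurd (key j hj h) not_false
  -- every point has norm² = norm c
  have sq_eq : ∀ k, padicNorm p (y k) ^ 2 = padicNorm p c := by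
    intro k
    rcases lt_trichotomy (padicNorm p (y k) ^ 2) (padicNorm p c) with h | h | h
    · exfalso
      have h1 : padicNorm p (y (k + 1)) = padicNorm p c := by
        rw [hy k, aux_norm_sub_eq (by rw [aux_norm_sq]; exact ne_of_lt h), aux_norm_sq,
          max_eq_right (le_of_lt h)]
      have h2 : padicNorm p (y (k + 2)) = padicNorm p c ^ 2 := by
        have := step (k + 1) (by rw [h1]; linarith) (by rw [h1]; nlinarith)
        rw [h1] at this; exact this
      exact key (k + 2) (by rw [h2]; nlinarith) (by rw [h2]; nlinarith)
    · exact h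
    · exfalso
      have hnn : 0 ≤ padicNorm p (y k) := padicNorm.nonneg _
      have h1' : 1 < padicNorm p (y k) := by nlinarith
      have hs := step k (le_of_lt h1') h
      exact key (k + 1) (by rw [hs]; nlinarith) (by rw [hs]; nlinarith)
  have norm_eq : ∀ k, padicNorm p (y k) = padicNorm p (y 0) := by
    intro k
    have h1 := sq_eq k
    have h2 := sq_eq 0
    have hnn1 : 0 ≤ padicNorm p (y k) := padicNorm.nonneg _
    have hnn2 : 0 ≤ padicNorm p (y 0) := padicNorm.nonneg _
    nlinarith
  have hgt : ∀ k, 1 < padicNorm p (y k) := by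
    intro k
    have h1 := sq_eq k
    have hnn : 0 ≤ padicNorm p (y k) := padicNorm.nonneg _
    nlinarith
  exact aux_valden_eq (hgt i) (hgt 0) (norm_eq i)

end Norm

lemma aux_den_eq (c : ℚ) (n : ℕ) (hn : 0 < n) (y : ℕ → ℚ)
    (hy : ∀ i, y (i + 1) = y i ^ 2 - c) (hper : ∀ i, y (i + n) = y i) (i : ℕ) :
    (y i).den = (y 0).den := by
  rw [Nat.eq_iff_prime_padicValNat_eq _ _ (y i).den_nz (y 0).den_nz]
  intro q hq
  haveI : Fact q.Prime := ⟨hq⟩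
  exact aux_den_per_prime c n hn y hy hper i

lemma aux_zmod (n : ℕ) (hn : 3 ≤ n) (ρ : ℕ → ZMod 3) (δ μ : ZMod 3) (hδ : δ ≠ 0)
    (hrec : ∀ k, ρ (k + 1) * δ = ρ k ^ 2 - μ)
    (hA : ∀ k, ρ k + ρ (k + 2) ≠ 0)
    (hper : ∀ k, ρ (k + n) = ρ k) :
    (∀ k, ρ k ≠ 0) ∧ (∀ k l, ρ k = ρ l) := by
  have sqone : ∀ t : ZMod 3, t ≠ 0 → t ^ 2 = 1 := by decide
  have step2 : ∀ k, ρ k ≠ 0 → ρ (k + 1) ≠ 0 → ρ (k + 2) = ρ (k + 1) := by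
    intro k h0 h1
    have e1 := hrec k
    have e2 := hrec (k + 1)
    rw [sqone _ h0] at e1
    rw [sqone _ h1] at e2
    rw [show k + 1 + 1 = k + 2 from by omega] at e2
    exact mul_right_cancel₀ hδ (by rw [e2, ← e1])
  have chain : ∀ j, ρ j ≠ 0 → ρ (j + 1) ≠ 0 → ∀ m, ρ (j + m) ≠ 0 := by
    intro j h0 h1 m
    have key : ∀ m, ρ (j + m) ≠ 0 ∧ ρ (j + m + 1) ≠ 0 := by
      intro m
      induction m with
      | zero => exact ⟨h0, h1⟩
      | succ m ih =>
        refine ⟨by rw [show j + (m + 1) = j + m + 1 from by omega]; exact ih.2, ?_⟩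
        rw [show j + (m + 1) + 1 = j + m + 2 from by omega, step2 (j + m) ih.1 ih.2]
        exact ih.2
    exact (key m).1
  have allnz : ∀ k, ρ k ≠ 0 := by
    intro k hk
    have hk2 : ρ (k + 2) ≠ 0 := fun h => hA k (by rw [hk, h, add_zero])
    by_cases h1 : ρ (k + 1) = 0
    · have hk3 : ρ (k + 3) ≠ 0 := fun h => hA (k + 1)
        (by rw [show k + 1 + 2 = k + 3 from by omega, h1, h, add_zero])
      have := chain (k + 2) hk2 (by rw [show k + 2 + 1 = k + 3 from by omega]; exact hk3) (n - 2)
      rw [show k + 2 + (n - 2) = k + n from by omega, hper k] at this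
      exact this hk
    · have := chain (k + 1) h1 (by rw [show k + 1 + 1 = k + 2 from by omega]; exact hk2) (n - 1)
      rw [show k + 1 + (n - 1) = k + n from by omega, hper k] at this
      exact this hk
  have cons : ∀ k, ρ (k + 2) = ρ (k + 1) := fun k => step2 k (allnz k) (allnz (k + 1))
  have h1const : ∀ m, ρ (m + 1) = ρ 1 := by
    intro m
    induction m with
    | zero => rfl
    | succ m ih => rw [show m + 1 + 1 = m + 2 from by omega, cons m, ih]
  have hall : ∀ k, ρ k = ρ 1 := by
    intro k
    cases k with
    | zero => rw [← hper 0, show 0 + n = (n - 1) + 1 from by omega, h1const]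
    | succ m => exact h1const m
  exact ⟨allnz, fun k l => by rw [hall k, hall l]⟩

/-- Let `(x 0, …, x (n-1))` be a cycle of `φ_c(t) = t² - c` of length `n ≥ 3`
whose common denominator `den (x 0)` is not divisible by `3`. Then the
numerators of the cycle are all nonzero mod `3` and all congruent to one
another mod `3`. -/
theorem stmt_17 (c : ℚ) (n : ℕ) (hn : 3 ≤ n) (x : ℕ → ℚ)
    (hdist : ∀ i j, i < n → j < n → i ≠ j → x i ≠ x j)
    (hcyc : ∀ i, i < n → (x i) ^ 2 - c = x ((i + 1) % n))
    (h3 : ¬ (3 ∣ (x 0).den)) :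
    (∀ i, i < n → ¬ ((3 : ℤ) ∣ (x i).num)) ∧
      (∀ i j, i < n → j < n → (x i).num ≡ (x j).num [ZMOD 3]) := by
  have hn0 : 0 < n := by omega
  set y : ℕ → ℚ := fun i => x (i % n) with hy_def
  have hy : ∀ i, y (i + 1) = y i ^ 2 - c := by
    intro i
    have h1 := hcyc (i % n) (Nat.mod_lt i hn0)
    have hidx : (i % n + 1) % n = (i + 1) % n := by
      conv_rhs => rw [Nat.add_mod]
      rw [Nat.mod_eq_of_lt (show 1 < n by omega)]
    show x ((i + 1) % n) = x (i % n) ^ 2 - c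
    rw [← hidx, ← h1]
  have hper : ∀ i, y (i + n) = y i := fun i => by
    show x ((i + n) % n) = x (i % n)
    rw [Nat.add_mod_right]
  have hy0 : y 0 = x 0 := by show x (0 % n) = x 0; rw [Nat.zero_mod]
  have hden : ∀ i, (y i).den = (x 0).den := by
    intro i
    rw [aux_den_eq c n hn0 y hy hper i, hy0]
  set a : ℕ → ℤ := fun i => (y i).num with ha_def
  set d : ℕ := (x 0).den with hd_def
  have hdq : (d : ℚ) ≠ 0 := Nat.cast_ne_zero.mpr (x 0).den_nz
  have hdz : (d : ℤ) ≠ 0 := Int.natCast_ne_zero.mpr (x 0).den_nz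
  have hfrac : ∀ i, y i = (a i : ℚ) / (d : ℚ) := by
    intro i
    conv_rhs => rw [← hden i]
    exact (Rat.num_div_den (y i)).symm
  have hq : ∀ i, (a (i + 1) : ℚ) * d = (a i : ℚ) ^ 2 - c * (d : ℚ) ^ 2 := by
    intro i
    have h := hy i
    rw [hfrac (i + 1), hfrac i] at h
    field_simp at h
    apply mul_right_cancel₀ hdq
    linear_combination (d : ℚ) * h
  have hint : ∀ i, a (i + 1) * (d : ℤ) = a i ^ 2 - (a 0 ^ 2 - a 1 * (d : ℤ)) := by
    intro i
    have h1 := hq i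
    have h0 := hq 0
    have : (a (i + 1) : ℚ) * d = (a i : ℚ) ^ 2 - ((a 0 : ℚ) ^ 2 - (a 1 : ℚ) * d) := by
      push_cast at h0 h1 ⊢
      linarith
    exact_mod_cast this
  have hpa : ∀ i, a (i + n) = a i := fun i => by
    show (y (i + n)).num = (y i).num
    rw [hper i]
  have hne2 : ∀ k, a k - a (k + 2) ≠ 0 := by
    intro k h
    have hnum : a k = a (k + 2) := by omega
    have hyk : y k = y (k + 2) := by
      have h1 : (y k).num = (y (k + 2)).num := hnum
      have h2 : (y k).den = (y (k + 2)).den := by rw [hden, hden]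
      exact Rat.ext h1 h2
    have hk1 : k % n < n := Nat.mod_lt _ hn0
    have hk2 : (k + 2) % n < n := Nat.mod_lt _ hn0
    have hne : k % n ≠ (k + 2) % n := by
      intro he
      have hdvd : n ∣ (k + 2) - k := (Nat.modEq_iff_dvd' (by omega)).mp he
      rw [show k + 2 - k = 2 from by omega] at hdvd
      exact absurd (Nat.le_of_dvd (by omega) hdvd) (by omega)
    exact hdist (k % n) ((k + 2) % n) hk1 hk2 hne hyk
  have h3Z : ¬ (3 : ℤ) ∣ (d : ℤ) := fun h => h3 (by exact_mod_cast h)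
  haveI f3 : Fact (Nat.Prime 3) := ⟨by norm_num⟩
  have hA : ∀ k, ¬ ((3 : ℤ) ∣ (a k + a (k + 2))) := by
    intro k hk
    have hbrel : ∀ m, (a (m + 1) - a (m + 3)) * (d : ℤ) =
        (a m - a (m + 2)) * (a m + a (m + 2)) := by
      intro m
      have h1 := hint m
      have h2 := hint (m + 2)
      rw [show m + 2 + 1 = m + 3 from by omega] at h2
      linear_combination h1 - h2
    have hs_ne : ∀ m, a m + a (m + 2) ≠ 0 := by
      intro m h0
      have hb := hbrel m
      rw [h0, mul_zero] at hb
      have := (mul_eq_zero.mp hb).resolve_right hdz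
      exact hne2 (m + 1) (by rw [show m + 1 + 2 = m + 3 from by omega]; exact this)
    have hstep : ∀ m, padicValInt 3 (a (m + 1) - a (m + 3)) =
        padicValInt 3 (a m - a (m + 2)) + padicValInt 3 (a m + a (m + 2)) := by
      intro m
      have e : padicValInt 3 ((a (m + 1) - a (m + 3)) * (d : ℤ)) =
          padicValInt 3 ((a m - a (m + 2)) * (a m + a (m + 2))) := by rw [hbrel m]
      have hb1 : a (m + 1) - a (m + 3) ≠ 0 := by
        have := hne2 (m + 1); rwa [show m + 1 + 2 = m + 3 from by omega] at this
      have hd0 : padicValInt 3 ((d : ℤ)) = 0 :=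
        padicValInt.eq_zero_of_not_dvd (p := 3) (by exact_mod_cast h3Z)
      rw [padicValInt.mul hb1 hdz, padicValInt.mul (hne2 m) (hs_ne m), hd0, add_zero] at e
      exact e
    have hw : 1 ≤ padicValInt 3 (a k + a (k + 2)) := by
      have := (padicValInt_dvd_iff (p := 3) 1 (a k + a (k + 2))).mp (by exact_mod_cast hk)
      rcases this with h | h
      · exact absurd h (hs_ne k)
      · exact h
    set v : ℕ → ℕ := fun m => padicValInt 3 (a m - a (m + 2)) with hv_def
    have hv_step : ∀ m, v m ≤ v (m + 1) := by
      intro m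
      have := hstep m
      simp only [hv_def]
      rw [show m + 1 + 2 = m + 3 from by omega, this]
      omega
    have hv_strict : v k < v (k + 1) := by
      have := hstep k
      simp only [hv_def]
      rw [show k + 1 + 2 = k + 3 from by omega, this]
      omega
    have hmono : ∀ m, v k < v (k + 1 + m) := by
      intro m
      induction m with
      | zero => simpa using hv_strict
      | succ m ih =>
        have := hv_step (k + 1 + m)
        rw [show k + 1 + (m + 1) = k + 1 + m + 1 from by omega]
        omega
    have hvper : v (k + n) = v k := by
      simp only [hv_def]
      rw [show k + n + 2 = (k + 2) + n from by omega, hpa k, hpa (k + 2)]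
    have := hmono (n - 1)
    rw [show k + 1 + (n - 1) = k + n from by omega, hvper] at this
    omega
  -- pass to ZMod 3
  set ρ : ℕ → ZMod 3 := fun k => ((a k : ℤ) : ZMod 3) with hρ_def
  have hδ : (((d : ℤ)) : ZMod 3) ≠ 0 := by
    intro h
    exact h3Z (by exact_mod_cast (ZMod.intCast_zmod_eq_zero_iff_dvd _ 3).mp h)
  have hrecρ : ∀ k, ρ (k + 1) * (((d : ℤ)) : ZMod 3) =
      ρ k ^ 2 - (((a 0 ^ 2 - a 1 * (d : ℤ)) : ℤ) : ZMod 3) := by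
    intro k
    have := congrArg (fun t : ℤ => ((t : ZMod 3))) (hint k)
    push_cast at this ⊢
    exact this
  have hAρ : ∀ k, ρ k + ρ (k + 2) ≠ 0 := by
    intro k h
    apply hA k
    have : (((a k + a (k + 2)) : ℤ) : ZMod 3) = 0 := by push_cast; exact h
    exact_mod_cast (ZMod.intCast_zmod_eq_zero_iff_dvd _ 3).mp this
  have hperρ : ∀ k, ρ (k + n) = ρ k := fun k => by
    simp only [hρ_def]; rw [hpa k]
  obtain ⟨hnz, hcongr⟩ := aux_zmod n hn ρ _ _ hδ hrecρ hAρ hperρ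
  have hxa : ∀ i, i < n → (x i).num = a i := by
    intro i hi
    show (x i).num = (y i).num
    show (x i).num = (x (i % n)).num
    rw [Nat.mod_eq_of_lt hi]
  constructor
  · intro i hi hdvd
    apply hnz i
    show ((a i : ℤ) : ZMod 3) = 0
    rw [ZMod.intCast_zmod_eq_zero_iff_dvd]
    rw [← hxa i hi]
    exact_mod_cast hdvd
  · intro i j hi hj
    have h := hcongr i j
    have h2 : (((x i).num : ℤ) : ZMod 3) = (((x j).num : ℤ) : ZMod 3) := by
      rw [hxa i hi, hxa j hj]; exact h
    have := (ZMod.intCast_eq_intCast_iff _ _ 3).mp h2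
    simpa using this
end
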